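/- arXiv:1804.08585 — 2 statements merged into one kernel-verified Lean document; each statement's English description precedes it below -/
import Mathlib

section
/- Let E be an exact category with enough projectives and P a projective cover of E having weak simple products. The following are equivalent: (1) for all objects J, X of P, the assignment a ↦ w_X(a) is right adjoint to (−) × X : Sub(J) → Sub(J × X) (i.e. for all b ∈ Sub(J) and a ∈ Sub(J × X), b × X ≤ a iff b ≤ w_X(a)); (2) the full subcategory of projective objects of E is closed under binary products; (3) every projective object of E is internally projective. -/
open CategoryTheory Limits

namespace ExComp

universe v u

variable {E : Type u} [Category.{v} E]

/-- A regular epimorphism, as a property of a morphism. -/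
def RegEpi {A B : E} (f : A ⟶ B) : Prop := Nonempty (RegularEpi f)

/-- An object is (regular) projective if its covariant hom functor sends regular
epimorphisms to surjections. -/
def RegProjective (X : E) : Prop :=
  ∀ ⦃A B : E⦄ (e : A ⟶ B), RegEpi e → ∀ f : X ⟶ B, ∃ g : X ⟶ A, g ≫ e = f

/-- `E` has enough projectives: every object admits a regular epimorphism from a
projective object. -/
def EnoughRegProjectives (E : Type u) [Category.{v} E] : Prop :=
  ∀ A : E, ∃ (X : E) (p : X ⟶ A), RegProjective X ∧ RegEpi p

/-- An internal equivalence relation: a jointly monic, reflexive, symmetric and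
transitive pair of parallel arrows. -/
structure IsEquivRelPair {R X : E} (r₁ r₂ : R ⟶ X) : Prop where
  jointlyMono : ∀ ⦃T : E⦄ (h k : T ⟶ R), h ≫ r₁ = k ≫ r₁ → h ≫ r₂ = k ≫ r₂ → h = k
  refl : ∃ d : X ⟶ R, d ≫ r₁ = 𝟙 X ∧ d ≫ r₂ = 𝟙 X
  symm : ∃ s : R ⟶ R, s ≫ r₁ = r₂ ∧ s ≫ r₂ = r₁
  trans : ∀ ⦃T : E⦄ (p q : T ⟶ R), p ≫ r₂ = q ≫ r₁ →
    ∃ t : T ⟶ R, t ≫ r₁ = p ≫ r₁ ∧ t ≫ r₂ = q ≫ r₂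

/-- An exact category: a finitely complete category where every morphism factors as a
regular epi followed by a mono, regular epis are stable under pullback, and every
internal equivalence relation is effective (it is the kernel pair of the coequaliser
it admits). -/
structure IsExact (E : Type u) [Category.{v} E] [HasFiniteLimits E] : Prop where
  factor : ∀ ⦃A B : E⦄ (f : A ⟶ B), ∃ (I : E) (e : A ⟶ I) (m : I ⟶ B),
    RegEpi e ∧ Mono m ∧ e ≫ m = f
  stable : ∀ ⦃A B C : E⦄ (f : A ⟶ B) (g : C ⟶ B), RegEpi f → RegEpi (pullback.snd f g)
  effective : ∀ ⦃R X : E⦄ (r₁ r₂ : R ⟶ X), IsEquivRelPair r₁ r₂ →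
    ∃ (Q : E) (q : X ⟶ Q) (w : r₁ ≫ q = r₂ ≫ q),
      Nonempty (IsColimit (Cofork.ofπ q w)) ∧ IsPullback r₁ r₂ q q

/-- A projective cover of `E`: a (full sub)collection of objects, each projective,
such that every object of `E` admits a regular epimorphism from one of them. -/
def IsProjectiveCover (P : Set E) : Prop :=
  (∀ X ∈ P, RegProjective X) ∧ ∀ A : E, ∃ X ∈ P, ∃ p : X ⟶ A, RegEpi p

section FinLim
variable [HasFiniteLimits E]

/-- `X` is internally projective: every arrow `T ⨯ X ⟶ B` lifts along a regular epi
`A ↠ B` after passing to a regular epi `U ↠ T`. -/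
def InternallyProjective (X : E) : Prop :=
  ∀ ⦃T A B : E⦄ (e : A ⟶ B), RegEpi e → ∀ f : T ⨯ X ⟶ B,
    ∃ (U : E) (u : U ⟶ T) (g : U ⨯ X ⟶ A), RegEpi u ∧ g ≫ e = prod.map u (𝟙 X) ≫ f

/-- Cartesian closure, as a property: for every object `X` the functor `(−) ⨯ X` has a
right adjoint. -/
def CartesianClosedP (E : Type u) [Category.{v} E] [HasFiniteLimits E] : Prop :=
  ∀ X : E, (prod.functor.flip.obj X).IsLeftAdjoint

/-- Local cartesian closure, as a property: every slice is cartesian closed. -/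
def LocallyCartesianClosedP (E : Type u) [Category.{v} E] [HasFiniteLimits E] : Prop :=
  ∀ (I : E) (F : Over I), ((prod.functor (C := Over I)).flip.obj F).IsLeftAdjoint

end FinLim

/-! ## Weak products and weak simple products -/

/-- A weak product in `P` of `X` and `Y`: a span through which every span in `P`
factors (not necessarily uniquely). -/
structure IsWeakProduct (P : Set E) {X Y V : E} (p : V ⟶ X) (q : V ⟶ Y) : Prop where
  mem : V ∈ P
  lift : ∀ ⦃V' : E⦄, V' ∈ P → ∀ (p' : V' ⟶ X) (q' : V' ⟶ Y),
    ∃ h : V' ⟶ V, h ≫ p = p' ∧ h ≫ q = q'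

/-- An arrow out of a weak product is determined by projections if it coequalises
every pair of arrows (from an object of `P`) coequalised by both projections. -/
def DeterminedByProjections (P : Set E) {V X Y Z : E} (p : V ⟶ X) (q : V ⟶ Y)
    (f : V ⟶ Z) : Prop :=
  ∀ ⦃V' : E⦄, V' ∈ P → ∀ (h k : V' ⟶ V), h ≫ p = k ≫ p → h ≫ q = k ≫ q → h ≫ f = k ≫ f

/-- A candidate diagram for a weak simple product of a span `J ←f Y →g X`. -/
structure WSPCone (P : Set E) {J Y X : E} (f : Y ⟶ J) (g : Y ⟶ X)
    (W V : E) (w : W ⟶ J) (p : V ⟶ W) (q : V ⟶ X) (e : V ⟶ Y) : Prop where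
  memW : W ∈ P
  wp : IsWeakProduct P p q
  det : DeterminedByProjections P p q e
  comm₁ : p ≫ w = e ≫ f
  comm₂ : q = e ≫ g

/-- A weak simple product: a weakly terminal candidate diagram. -/
structure IsWeakSimpleProduct (P : Set E) {J Y X : E} (f : Y ⟶ J) (g : Y ⟶ X)
    (W V : E) (w : W ⟶ J) (p : V ⟶ W) (q : V ⟶ X) (e : V ⟶ Y) : Prop where
  cone : WSPCone P f g W V w p q e
  lift : ∀ ⦃W' V' : E⦄ (w' : W' ⟶ J) (p' : V' ⟶ W') (q' : V' ⟶ X) (e' : V' ⟶ Y),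
    WSPCone P f g W' V' w' p' q' e' →
    ∃ (α : W' ⟶ W) (β : V' ⟶ V),
      α ≫ w = w' ∧ β ≫ p = p' ≫ α ∧ β ≫ q = q' ∧ β ≫ e = e'

/-- `P` has weak simple products. -/
def HasWeakSimpleProducts (P : Set E) : Prop :=
  ∀ ⦃J Y X : E⦄, J ∈ P → Y ∈ P → X ∈ P → ∀ (f : Y ⟶ J) (g : Y ⟶ X),
    ∃ (W V : E) (w : W ⟶ J) (p : V ⟶ W) (q : V ⟶ X) (e : V ⟶ Y),
      IsWeakSimpleProduct P f g W V w p q e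

/-! ## Pseudo simple products -/

/-- A candidate diagram for a pseudo simple product (no determinacy requirement). -/
structure PSPCone (P : Set E) {J Y X : E} (f : Y ⟶ J) (g : Y ⟶ X)
    (W V : E) (w : W ⟶ J) (p : V ⟶ W) (q : V ⟶ X) (e : V ⟶ Y) : Prop where
  memW : W ∈ P
  wp : IsWeakProduct P p q
  comm₁ : p ≫ w = e ≫ f
  comm₂ : q = e ≫ g

/-- A pseudo simple product: a weakly terminal candidate diagram. -/
structure IsPseudoSimpleProduct (P : Set E) {J Y X : E} (f : Y ⟶ J) (g : Y ⟶ X)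
    (W V : E) (w : W ⟶ J) (p : V ⟶ W) (q : V ⟶ X) (e : V ⟶ Y) : Prop where
  cone : PSPCone P f g W V w p q e
  lift : ∀ ⦃W' V' : E⦄ (w' : W' ⟶ J) (p' : V' ⟶ W') (q' : V' ⟶ X) (e' : V' ⟶ Y),
    PSPCone P f g W' V' w' p' q' e' →
    ∃ (α : W' ⟶ W) (β : V' ⟶ V),
      α ≫ w = w' ∧ β ≫ p = p' ≫ α ∧ β ≫ q = q' ∧ β ≫ e = e'

/-- `P` has pseudo simple products. -/
def HasPseudoSimpleProducts (P : Set E) : Prop :=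
  ∀ ⦃J Y X : E⦄, J ∈ P → Y ∈ P → X ∈ P → ∀ (f : Y ⟶ J) (g : Y ⟶ X),
    ∃ (W V : E) (w : W ⟶ J) (p : V ⟶ W) (q : V ⟶ X) (e : V ⟶ Y),
      IsPseudoSimpleProduct P f g W V w p q e

/-! ## Weak exponentials -/

/-- A candidate diagram for a weak exponential of `X` and `Y`. -/
structure WExpCone (P : Set E) {X Y : E} (W V : E) (p : V ⟶ W) (q : V ⟶ X)
    (e : V ⟶ Y) : Prop where
  memW : W ∈ P
  wp : IsWeakProduct P p q
  det : DeterminedByProjections P p q e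

/-- A weak exponential of `X` and `Y` in `P`. -/
structure IsWeakExponential (P : Set E) {X Y : E} (W V : E) (p : V ⟶ W) (q : V ⟶ X)
    (e : V ⟶ Y) : Prop where
  cone : WExpCone P W V p q e
  lift : ∀ ⦃W' V' : E⦄ (p' : V' ⟶ W') (q' : V' ⟶ X) (e' : V' ⟶ Y),
    WExpCone P W' V' p' q' e' →
    ∃ (α : W' ⟶ W) (β : V' ⟶ V), β ≫ p = p' ≫ α ∧ β ≫ q = q' ∧ β ≫ e = e'

/-- `P` has weak exponentials. -/
def HasWeakExponentials (P : Set E) : Prop :=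
  ∀ ⦃X Y : E⦄, X ∈ P → Y ∈ P →
    ∃ (W V : E) (p : V ⟶ W) (q : V ⟶ X) (e : V ⟶ Y), IsWeakExponential P W V p q e

/-- A quasi exponential of `X` and `B`: the weak universal property of an exponential
restricted to projective sources. -/
def IsQuasiExponential [HasFiniteLimits E] (P : Set E) (X : E) {B : E} (W : E)
    (e : W ⨯ X ⟶ B) : Prop :=
  ∀ ⦃Z : E⦄, Z ∈ P → ∀ f : Z ⨯ X ⟶ B, ∃ g : Z ⟶ W, prod.map g (𝟙 X) ≫ e = f

section FinLim2
variable [HasFiniteLimits E]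

/-! ## Pseudo equivalence relations, equalities and generalised weak (simple) products -/

/-- A pseudo equivalence relation: a pair of parallel arrows whose image in `E` is an
equivalence relation. -/
def IsPseudoEquivRel {Y1 Y0 : E} (y₁ y₂ : Y1 ⟶ Y0) : Prop :=
  ∃ (R : E) (e : Y1 ⟶ R) (m : R ⟶ Y0 ⨯ Y0), RegEpi e ∧ Mono m ∧
    e ≫ m = prod.lift y₁ y₂ ∧ IsEquivRelPair (m ≫ prod.fst) (m ≫ prod.snd)

/-- An equality for a weak limit, relative to the comparison arrow `c : V0 ⟶ L` into
the actual limit: a pseudo equivalence relation `v₁, v₂ : V1 ⇉ V0` in `P` such that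
`c` is a coequaliser of `v₁, v₂` and `V1` regularly covers the kernel pair of `c`. -/
structure IsEqualityFor (P : Set E) {V1 V0 L : E} (c : V0 ⟶ L) (v₁ v₂ : V1 ⟶ V0) :
    Prop where
  mem : V1 ∈ P
  per : IsPseudoEquivRel v₁ v₂
  w : v₁ ≫ c = v₂ ≫ c
  coeq : Nonempty (IsColimit (Cofork.ofπ c w))
  cover : RegEpi (pullback.lift v₁ v₂ w)

/-- An arrow `e : V ⟶ Z0` out of a weak product with projections `p, q` preserves
projections with respect to a pseudo equivalence relation `z₁, z₂ : Z1 ⇉ Z0` if for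
any equality `v₁, v₂ : V1 ⇉ V` for the weak product there is `t : V1 ⟶ Z1` with
`t ≫ zᵢ = vᵢ ≫ e`. -/
def PreservesProjWP (P : Set E) {V X Y Z1 Z0 : E} (p : V ⟶ X) (q : V ⟶ Y)
    (z₁ z₂ : Z1 ⟶ Z0) (e : V ⟶ Z0) : Prop :=
  ∀ ⦃V1 : E⦄ (v₁ v₂ : V1 ⟶ V), IsEqualityFor P (prod.lift p q) v₁ v₂ →
    ∃ t : V1 ⟶ Z1, t ≫ z₁ = v₁ ≫ e ∧ t ≫ z₂ = v₂ ≫ e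

/-- A candidate diagram for a generalised weak simple product of `f` and `g` with
respect to the pseudo equivalence relation `y₁, y₂`. -/
structure GWSPCone (P : Set E) {Y1 Y0 J X : E} (y₁ y₂ : Y1 ⟶ Y0) (f : Y0 ⟶ J)
    (g : Y0 ⟶ X) (W V : E) (w : W ⟶ J) (p : V ⟶ W) (q : V ⟶ X) (e : V ⟶ Y0) :
    Prop where
  memW : W ∈ P
  wp : IsWeakProduct P p q
  pres : PreservesProjWP P p q y₁ y₂ e
  comm₁ : p ≫ w = e ≫ f
  comm₂ : q = e ≫ g

/-- A generalised weak simple product: a weakly terminal candidate diagram. -/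
structure IsGWSP (P : Set E) {Y1 Y0 J X : E} (y₁ y₂ : Y1 ⟶ Y0) (f : Y0 ⟶ J)
    (g : Y0 ⟶ X) (W V : E) (w : W ⟶ J) (p : V ⟶ W) (q : V ⟶ X) (e : V ⟶ Y0) :
    Prop where
  cone : GWSPCone P y₁ y₂ f g W V w p q e
  lift : ∀ ⦃W' V' : E⦄ (w' : W' ⟶ J) (p' : V' ⟶ W') (q' : V' ⟶ X) (e' : V' ⟶ Y0),
    GWSPCone P y₁ y₂ f g W' V' w' p' q' e' →
    ∃ (α : W' ⟶ W) (β : V' ⟶ V),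
      α ≫ w = w' ∧ β ≫ p = p' ≫ α ∧ β ≫ q = q' ∧ β ≫ e = e'

/-- `P` has generalised weak simple products. -/
def HasGWSP (P : Set E) : Prop :=
  ∀ ⦃Y1 Y0 J X : E⦄, Y1 ∈ P → Y0 ∈ P → J ∈ P → X ∈ P →
    ∀ (y₁ y₂ : Y1 ⟶ Y0), IsPseudoEquivRel y₁ y₂ →
    ∀ (f : Y0 ⟶ J) (g : Y0 ⟶ X), y₁ ≫ f = y₂ ≫ f → y₁ ≫ g = y₂ ≫ g →
    ∃ (W V : E) (w : W ⟶ J) (p : V ⟶ W) (q : V ⟶ X) (e : V ⟶ Y0),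
      IsGWSP P y₁ y₂ f g W V w p q e

/-- A candidate diagram for a generalised weak exponential of `X` and `y₁, y₂`. -/
structure GWExpCone (P : Set E) {X Y1 Y0 : E} (y₁ y₂ : Y1 ⟶ Y0)
    (W V : E) (p : V ⟶ W) (q : V ⟶ X) (e : V ⟶ Y0) : Prop where
  memW : W ∈ P
  wp : IsWeakProduct P p q
  pres : PreservesProjWP P p q y₁ y₂ e

/-- A generalised weak exponential of `X` and a pseudo equivalence relation. -/
structure IsGWExp (P : Set E) {X Y1 Y0 : E} (y₁ y₂ : Y1 ⟶ Y0)
    (W V : E) (p : V ⟶ W) (q : V ⟶ X) (e : V ⟶ Y0) : Prop where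
  cone : GWExpCone P y₁ y₂ W V p q e
  lift : ∀ ⦃W' V' : E⦄ (p' : V' ⟶ W') (q' : V' ⟶ X) (e' : V' ⟶ Y0),
    GWExpCone P y₁ y₂ W' V' p' q' e' →
    ∃ (α : W' ⟶ W) (β : V' ⟶ V), β ≫ p = p' ≫ α ∧ β ≫ q = q' ∧ β ≫ e = e'

/-! ## Weak pullbacks and generalised weak dependent products -/

/-- A weak pullback in `P` of the cospan `X →f J ←w W`. -/
structure IsWeakPullback (P : Set E) {X J W V : E} (f : X ⟶ J) (w : W ⟶ J)
    (a : V ⟶ X) (b : V ⟶ W) : Prop where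
  mem : V ∈ P
  comm : a ≫ f = b ≫ w
  lift : ∀ ⦃V' : E⦄, V' ∈ P → ∀ (a' : V' ⟶ X) (b' : V' ⟶ W), a' ≫ f = b' ≫ w →
    ∃ h : V' ⟶ V, h ≫ a = a' ∧ h ≫ b = b'

/-- Preservation of projections for an arrow out of a weak pullback. -/
def PreservesProjWPB (P : Set E) {V X J W Z1 Z0 : E} (f : X ⟶ J) (w : W ⟶ J)
    (a : V ⟶ X) (b : V ⟶ W) (h : a ≫ f = b ≫ w) (z₁ z₂ : Z1 ⟶ Z0) (e : V ⟶ Z0) :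
    Prop :=
  ∀ ⦃V1 : E⦄ (v₁ v₂ : V1 ⟶ V), IsEqualityFor P (pullback.lift a b h) v₁ v₂ →
    ∃ t : V1 ⟶ Z1, t ≫ z₁ = v₁ ≫ e ∧ t ≫ z₂ = v₂ ≫ e

/-- A candidate diagram for a generalised weak dependent product of `g : Y0 ⟶ X`
along `f : X ⟶ J` with respect to `y₁, y₂`. -/
structure GWDPCone (P : Set E) {Y1 Y0 X J : E} (y₁ y₂ : Y1 ⟶ Y0) (g : Y0 ⟶ X)
    (f : X ⟶ J) (W V : E) (w : W ⟶ J) (a : V ⟶ X) (b : V ⟶ W) (e : V ⟶ Y0) :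
    Prop where
  memW : W ∈ P
  comm : a ≫ f = b ≫ w
  wpb : IsWeakPullback P f w a b
  overX : e ≫ g = a
  pres : PreservesProjWPB P f w a b comm y₁ y₂ e

/-- A generalised weak dependent product: a weakly terminal candidate diagram. -/
structure IsGWDP (P : Set E) {Y1 Y0 X J : E} (y₁ y₂ : Y1 ⟶ Y0) (g : Y0 ⟶ X)
    (f : X ⟶ J) (W V : E) (w : W ⟶ J) (a : V ⟶ X) (b : V ⟶ W) (e : V ⟶ Y0) :
    Prop where
  cone : GWDPCone P y₁ y₂ g f W V w a b e
  lift : ∀ ⦃W' V' : E⦄ (w' : W' ⟶ J) (a' : V' ⟶ X) (b' : V' ⟶ W') (e' : V' ⟶ Y0),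
    GWDPCone P y₁ y₂ g f W' V' w' a' b' e' →
    ∃ (α : W' ⟶ W) (β : V' ⟶ V),
      α ≫ w = w' ∧ β ≫ a = a' ∧ β ≫ b = b' ≫ α ∧ β ≫ e = e'

/-- `P` has generalised weak dependent products (i.e. `P` is weakly locally cartesian
closed). -/
def HasGWDP (P : Set E) : Prop :=
  ∀ ⦃Y1 Y0 X J : E⦄, Y1 ∈ P → Y0 ∈ P → X ∈ P → J ∈ P →
    ∀ (y₁ y₂ : Y1 ⟶ Y0), IsPseudoEquivRel y₁ y₂ →
    ∀ (g : Y0 ⟶ X) (f : X ⟶ J), y₁ ≫ g = y₂ ≫ g →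
    ∃ (W V : E) (w : W ⟶ J) (a : V ⟶ X) (b : V ⟶ W) (e : V ⟶ Y0),
      IsGWDP P y₁ y₂ g f W V w a b e

/-! ## The functor `w_X` on subobjects induced by weak simple products -/

/-- The adjunction property of the weak-simple-product operation `w_X` on subobjects:
for every subobject `a : A ↪ J ⨯ X`, every `P`-cover `Y ↠ A`, every weak simple
product `W → J` of the induced span and every image factorisation `W ↠ I ↪ J` of it,
the subobject `I ↪ J` is a value at `a` of a right adjoint to
`(−) ⨯ X : Sub(J) → Sub(J ⨯ X)`. -/
def WAdj (P : Set E) (J X : E) : Prop :=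
  ∀ ⦃A : E⦄ (a : A ⟶ J ⨯ X), Mono a →
  ∀ ⦃Y : E⦄, Y ∈ P → ∀ (c : Y ⟶ A), RegEpi c →
  ∀ ⦃W V : E⦄ (w : W ⟶ J) (p : V ⟶ W) (q : V ⟶ X) (e : V ⟶ Y),
    IsWeakSimpleProduct P (c ≫ a ≫ prod.fst) (c ≫ a ≫ prod.snd) W V w p q e →
  ∀ ⦃I : E⦄ (ew : W ⟶ I) (m : I ⟶ J), RegEpi ew → Mono m → ew ≫ m = w →
  ∀ ⦃B : E⦄ (b : B ⟶ J), Mono b →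
    ((∃ t : B ⨯ X ⟶ A, t ≫ a = prod.map b (𝟙 X)) ↔ ∃ s : B ⟶ I, s ≫ m = b)

/-! ## Weak dependent products (à la Carboni–Rosolini) -/

/-- `P` has weak dependent products: for `f : X ⟶ J` and `g : Y ⟶ X` in `P` there are
`w : W ⟶ J` in `P` and a surjection `Hom_{P/J}(h, w) → Hom_{P/X}(f*(h), g)` natural
in `h ∈ P/J`. -/
def HasWeakDependentProducts (P : Set E) : Prop :=
  ∀ ⦃X J Y : E⦄, X ∈ P → J ∈ P → Y ∈ P → ∀ (f : X ⟶ J) (g : Y ⟶ X),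
    ∃ (W : E) (_ : W ∈ P) (w : W ⟶ J)
      (ε : ∀ ⦃T : E⦄, T ∈ P → ∀ (h : T ⟶ J) (k : T ⟶ W), k ≫ w = h →
        (pullback h f ⟶ Y)),
      (∀ ⦃T : E⦄ (hT : T ∈ P) (h : T ⟶ J) (k : T ⟶ W) (hk : k ≫ w = h),
         ε hT h k hk ≫ g = pullback.snd h f) ∧
      (∀ ⦃T : E⦄ (hT : T ∈ P) (h : T ⟶ J) (d : pullback h f ⟶ Y),
         d ≫ g = pullback.snd h f → ∃ (k : T ⟶ W) (hk : k ≫ w = h), ε hT h k hk = d) ∧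
      (∀ ⦃T' T : E⦄ (hT' : T' ∈ P) (hT : T ∈ P) (u : T' ⟶ T) (h : T ⟶ J) (k : T ⟶ W)
         (hk : k ≫ w = h),
         ε hT' (u ≫ h) (u ≫ k) (by rw [Category.assoc, hk]) =
           pullback.map (u ≫ h) f h f u (𝟙 X) (𝟙 J) (by simp) (by simp) ≫ ε hT h k hk)

end FinLim2

/-!
Everything rests on two properties of a weak simple product `W ← V → X` of a span
`J ← Y → X`. First, `V → Y` descends along the epimorphism `V → W ⨯ X` because it is
determined by projections, giving an evaluation arrow `W ⨯ X → Y` over `J ⨯ X`. Second,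
weak terminality makes every `Z → J` with `Z ∈ P` that admits an arrow `Z ⨯ X → Y` over
`J ⨯ X` factor through `W → J`.

(1) ⇒ (2): taking `a = ⊤` and `b = ⊤`, the adjunction says that `W → J` has image `J`, so
it splits when `J ∈ P`; composing the splitting with evaluation splits a `P`-cover of
`J ⨯ X`, so `J ⨯ X` is projective. (2) ⇒ (1): if `Z ⨯ X` is projective, `Z ⨯ X → A` lifts
to `Y` and the second property gives `b ≤ w_X(a)` from `b ⨯ X ≤ a`; the converse
inequality uses only evaluation. (2) ⇔ (3) is a direct diagram chase, and since every
projective is a retract of an object of `P`, closure under products can be checked on `P`.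
-/

section Projectives

variable {E : Type u} [Category.{v} E]

lemma RegEpi.isRegularEpi {A B : E} {f : A ⟶ B} (hf : RegEpi f) : IsRegularEpi f :=
  ⟨hf⟩

lemma RegEpi.exists_lift_of_mono {A B C D : E} {ρ : C ⟶ D} (hρ : RegEpi ρ) {m : A ⟶ B}
    [Mono m] {u : C ⟶ A} {v : D ⟶ B} (h : u ≫ m = ρ ≫ v) : ∃ t : D ⟶ A, t ≫ m = v := by
  have := hρ.isRegularEpi
  have sq : CommSq u ρ m v := ⟨h⟩
  exact ⟨sq.lift, sq.fac_right⟩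

lemma RegProjective.of_retract {X Y : E} (hY : RegProjective Y) (h : Retract X Y) :
    RegProjective X := by
  intro A B e he f
  obtain ⟨g, hg⟩ := hY e he (h.r ≫ f)
  exact ⟨h.i ≫ g, by rw [Category.assoc, hg, h.retract_assoc]⟩

lemma RegProjective.exists_retract_mem {P : Set E} (hP : IsProjectiveCover P) {X : E}
    (hX : RegProjective X) : ∃ Y ∈ P, Nonempty (Retract X Y) := by
  obtain ⟨Y, hY, r, hr⟩ := hP.2 X
  obtain ⟨i, hi⟩ := hX r hr (𝟙 X)
  exact ⟨Y, hY, ⟨⟨i, r, hi⟩⟩⟩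

lemma regProjective_prod_of_forall_mem [HasBinaryProducts E] {P : Set E}
    (hP : IsProjectiveCover P) (hcl : ∀ J ∈ P, ∀ X ∈ P, RegProjective (J ⨯ X)) {X Y : E}
    (hX : RegProjective X) (hY : RegProjective Y) : RegProjective (X ⨯ Y) := by
  obtain ⟨X', hX', ⟨rX⟩⟩ := hX.exists_retract_mem hP
  obtain ⟨Y', hY', ⟨rY⟩⟩ := hY.exists_retract_mem hP
  exact (hcl X' hX' Y' hY').of_retract ⟨prod.map rX.i rY.i, prod.map rX.r rY.r, by simp⟩

end Projectives

section WeakProducts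

variable {E : Type u} [Category.{v} E] [HasBinaryProducts E] {P : Set E}

lemma IsWeakProduct.of_regEpi (hP : IsProjectiveCover P) {Z X V : E} (hV : V ∈ P)
    {r : V ⟶ Z ⨯ X} (hr : RegEpi r) : IsWeakProduct P (r ≫ prod.fst) (r ≫ prod.snd) := by
  refine ⟨hV, fun V' hV' p' q' => ?_⟩
  obtain ⟨h, hh⟩ := hP.1 V' hV' r hr (prod.lift p' q')
  exact ⟨h, by rw [reassoc_of% hh, prod.lift_fst], by rw [reassoc_of% hh, prod.lift_snd]⟩

lemma comp_prod_lift_eq {X Y V V₀ : E} {p : V ⟶ X} {q : V ⟶ Y} {h : V₀ ⟶ V}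
    {r : V₀ ⟶ X ⨯ Y} (hp : h ≫ p = r ≫ prod.fst) (hq : h ≫ q = r ≫ prod.snd) :
    h ≫ prod.lift p q = r := by
  ext <;> simp [hp, hq, prod.lift_fst, prod.lift_snd]

lemma IsWeakProduct.epi_lift (hP : IsProjectiveCover P) {X Y V : E} {p : V ⟶ X} {q : V ⟶ Y}
    (hpq : IsWeakProduct P p q) : Epi (prod.lift p q) := by
  obtain ⟨V₀, hV₀, r, hr⟩ := hP.2 (X ⨯ Y)
  obtain ⟨h, hhp, hhq⟩ := hpq.lift hV₀ (r ≫ prod.fst) (r ≫ prod.snd)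
  have := hr.isRegularEpi
  exact epi_of_epi_fac (comp_prod_lift_eq hhp hhq)

lemma DeterminedByProjections.of_prod {V Z X Y : E} (r : V ⟶ Z ⨯ X) (g : Z ⨯ X ⟶ Y) :
    DeterminedByProjections P (r ≫ prod.fst) (r ≫ prod.snd) (r ≫ g) := by
  intro V' _ h k hp hq
  have hr : h ≫ r = k ≫ r := by
    ext
    · simpa using hp
    · simpa using hq
  rw [reassoc_of% hr]

lemma DeterminedByProjections.eq_of_comp_lift_eq {V X Y Z T : E} {p : V ⟶ X} {q : V ⟶ Y}
    {f : V ⟶ Z} (hf : DeterminedByProjections P p q f) (hT : T ∈ P) {h k : T ⟶ V}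
    (hhk : h ≫ prod.lift p q = k ≫ prod.lift p q) : h ≫ f = k ≫ f :=
  hf hT h k (by simpa [prod.lift_fst] using hhk =≫ prod.fst)
    (by simpa [prod.lift_snd] using hhk =≫ prod.snd)

lemma DeterminedByProjections.exists_desc (hP : IsProjectiveCover P) {V X Y Z : E}
    {p : V ⟶ X} {q : V ⟶ Y} {f : V ⟶ Z} (hpq : IsWeakProduct P p q)
    (hf : DeterminedByProjections P p q f) : ∃ φ : X ⨯ Y ⟶ Z, prod.lift p q ≫ φ = f := by
  obtain ⟨V₀, hV₀, r, hr⟩ := hP.2 (X ⨯ Y)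
  obtain ⟨h, hhp, hhq⟩ := hpq.lift hV₀ (r ≫ prod.fst) (r ≫ prod.snd)
  have hhr : h ≫ prod.lift p q = r := comp_prod_lift_eq hhp hhq
  have := hr.isRegularEpi
  have hdesc : ∀ {T : E} (g₁ g₂ : T ⟶ V₀), g₁ ≫ r = g₂ ≫ r → g₁ ≫ h ≫ f = g₂ ≫ h ≫ f := by
    intro T g₁ g₂ hg
    obtain ⟨K, hK, κ, hκ⟩ := hP.2 T
    have := hκ.isRegularEpi
    rw [← cancel_epi κ]
    simpa using hf.eq_of_comp_lift_eq hK (h := κ ≫ g₁ ≫ h) (k := κ ≫ g₂ ≫ h)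
      (by simp only [Category.assoc, hhr, hg])
  refine ⟨EffectiveEpi.desc r (h ≫ f) hdesc, ?_⟩
  obtain ⟨g, hg⟩ := hP.1 V hpq.mem r hr (prod.lift p q)
  calc prod.lift p q ≫ EffectiveEpi.desc r (h ≫ f) hdesc
      = g ≫ h ≫ f := by rw [← hg, Category.assoc, EffectiveEpi.fac]
    _ = f := by
      simpa using hf.eq_of_comp_lift_eq hpq.mem (h := g ≫ h) (k := 𝟙 V)
        (by simp only [Category.assoc, hhr, hg, Category.id_comp])

end WeakProducts

section WeakSimpleProducts

variable {E : Type u} [Category.{v} E] [HasBinaryProducts E] {P : Set E}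
  {J Y X W V : E} {f : Y ⟶ J} {g : Y ⟶ X} {w : W ⟶ J} {p : V ⟶ W} {q : V ⟶ X} {e : V ⟶ Y}

lemma WSPCone.exists_eval (hP : IsProjectiveCover P) (h : WSPCone P f g W V w p q e) :
    ∃ φ : W ⨯ X ⟶ Y, φ ≫ f = prod.fst ≫ w ∧ φ ≫ g = prod.snd := by
  obtain ⟨φ, hφ⟩ := h.det.exists_desc hP h.wp
  have := h.wp.epi_lift hP
  refine ⟨φ, ?_, ?_⟩
  · rw [← cancel_epi (prod.lift p q), reassoc_of% hφ, ← h.comm₁, prod.lift_fst_assoc]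
  · rw [← cancel_epi (prod.lift p q), reassoc_of% hφ, ← h.comm₂, prod.lift_snd]

lemma IsWeakSimpleProduct.exists_factor (hP : IsProjectiveCover P)
    (h : IsWeakSimpleProduct P f g W V w p q e) {Z : E} (hZ : Z ∈ P) (w' : Z ⟶ J)
    (k : Z ⨯ X ⟶ Y) (hkf : k ≫ f = prod.fst ≫ w') (hkg : k ≫ g = prod.snd) :
    ∃ α : Z ⟶ W, α ≫ w = w' := by
  obtain ⟨V', hV', r, hr⟩ := hP.2 (Z ⨯ X)
  have cone : WSPCone P f g Z V' w' (r ≫ prod.fst) (r ≫ prod.snd) (r ≫ k) :=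
    ⟨hZ, .of_regEpi hP hV' hr, .of_prod r k, by simp [hkf], by simp [hkg]⟩
  obtain ⟨α, -, hα, -⟩ := h.lift w' _ _ _ cone
  exact ⟨α, hα⟩

end WeakSimpleProducts

section Equivalences

variable {E : Type u} [Category.{v} E] [HasFiniteLimits E] {P : Set E}

lemma regProjective_prod_of_wAdj (hE : IsExact E) (hP : IsProjectiveCover P)
    (hwsp : HasWeakSimpleProducts P) {J X : E} (hJ : J ∈ P) (hX : X ∈ P)
    (hw : WAdj P J X) : RegProjective (J ⨯ X) := by
  obtain ⟨Y, hY, c, hc⟩ := hP.2 (J ⨯ X)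
  obtain ⟨W, V, w, p, q, e, hWSP⟩ :=
    hwsp hJ hY hX (c ≫ 𝟙 (J ⨯ X) ≫ prod.fst) (c ≫ 𝟙 (J ⨯ X) ≫ prod.snd)
  obtain ⟨I, ew, m, hew, hm, hfac⟩ := hE.factor w
  obtain ⟨s, hs⟩ := (hw (𝟙 _) inferInstance hY c hc w p q e hWSP ew m hew hm hfac
    (𝟙 J) inferInstance).1 ⟨𝟙 _, by simp⟩
  obtain ⟨l, hl⟩ := hP.1 J hJ ew hew s
  obtain ⟨φ, hφf, hφg⟩ := hWSP.cone.exists_eval hP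
  have hsection : (prod.map l (𝟙 X) ≫ φ) ≫ c = 𝟙 (J ⨯ X) := by
    ext
    · simpa [← hfac, reassoc_of% hl, hs] using prod.map l (𝟙 X) ≫= hφf
    · simpa using prod.map l (𝟙 X) ≫= hφg
  exact (hP.1 Y hY).of_retract ⟨_, c, hsection⟩

lemma wAdj_of_forall_regProjective_prod (hP : IsProjectiveCover P) {J X : E}
    (hcl : ∀ Z ∈ P, RegProjective (Z ⨯ X)) : WAdj P J X := by
  intro A a ha Y hY c hc W V w p q e hWSP I ew m hew hm hfac B b _
  constructor
  · rintro ⟨t, ht⟩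
    obtain ⟨Z, hZ, z, hz⟩ := hP.2 B
    obtain ⟨k, hk⟩ := hcl Z hZ c hc (prod.map z (𝟙 X) ≫ t)
    obtain ⟨α, hα⟩ := hWSP.exists_factor hP hZ (z ≫ b) k
      (by simp [reassoc_of% hk, reassoc_of% ht]) (by simp [reassoc_of% hk, reassoc_of% ht])
    exact hz.exists_lift_of_mono (u := α ≫ ew) (by rw [Category.assoc, hfac, hα])
  · rintro ⟨s, hs⟩
    obtain ⟨C, hC, ρ, hρ⟩ := hP.2 (B ⨯ X)
    obtain ⟨l, hl⟩ := hP.1 C hC ew hew (ρ ≫ prod.fst ≫ s)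
    obtain ⟨φ, hφf, hφg⟩ := hWSP.cone.exists_eval hP
    refine hρ.exists_lift_of_mono (u := prod.lift l (ρ ≫ prod.snd) ≫ φ ≫ c) ?_
    ext
    · simpa [← hfac, reassoc_of% hl, hs, prod.lift_fst_assoc] using
        prod.lift l (ρ ≫ prod.snd) ≫= hφf
    · simpa [prod.lift_snd] using prod.lift l (ρ ≫ prod.snd) ≫= hφg

lemma RegProjective.prod_of_internallyProjective {X Y : E} (hX : RegProjective X)
    (hY : InternallyProjective Y) : RegProjective (X ⨯ Y) := by
  intro A B e he f
  obtain ⟨U, u, g, hu, hg⟩ := hY e he f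
  obtain ⟨s, hs⟩ := hX u hu (𝟙 X)
  exact ⟨prod.map s (𝟙 Y) ≫ g, by rw [Category.assoc, hg, prod.map_map_assoc, hs]; simp⟩

lemma internallyProjective_of_forall_regProjective_prod (hP : IsProjectiveCover P) {X : E}
    (hcl : ∀ J ∈ P, RegProjective (J ⨯ X)) : InternallyProjective X := by
  intro T A B e he f
  obtain ⟨J, hJ, j, hj⟩ := hP.2 T
  obtain ⟨g, hg⟩ := hcl J hJ e he (prod.map j (𝟙 X) ≫ f)
  exact ⟨J, j, g, hj, hg⟩

end Equivalences

/-- With `P` having weak simple products, the following are equivalent: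
(1) `w_X ⊣`-property holds for all `J, X ∈ P`; (2) projectives are closed under binary
products; (3) every projective is internally projective. -/
theorem stmt5 {E : Type u} [Category.{v} E] [HasFiniteLimits E]
    (hE : IsExact E) (P : Set E) (hP : IsProjectiveCover P)
    (hwsp : HasWeakSimpleProducts P) :
    ((∀ J ∈ P, ∀ X ∈ P, WAdj P J X) ↔
       (∀ X Y : E, RegProjective X → RegProjective Y → RegProjective (X ⨯ Y))) ∧
    ((∀ X Y : E, RegProjective X → RegProjective Y → RegProjective (X ⨯ Y)) ↔
       (∀ X : E, RegProjective X → InternallyProjective X)) := by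
  refine ⟨⟨fun hw X Y hX hY => ?_, fun hcl J _ X hX => ?_⟩,
    ⟨fun hcl X hX => ?_, fun hint X Y hX hY => hX.prod_of_internallyProjective (hint Y hY)⟩⟩
  · exact regProjective_prod_of_forall_mem hP
      (fun J hJ X hX => regProjective_prod_of_wAdj hE hP hwsp hJ hX (hw J hJ X hX)) hX hY
  · exact wAdj_of_forall_regProjective_prod hP fun Z hZ => hcl Z X (hP.1 Z hZ) (hP.1 X hX)
  · exact internallyProjective_of_forall_regProjective_prod hP fun J hJ => hcl J X (hP.1 J hJ) hX

end ExComp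
end

section
/- Let E be an exact category with enough projectives and let P̄ be the full subcategory of projective objects of E. Assume P̄ is closed under binary products in E. Then E is cartesian closed if and only if P̄ has weak simple products. -/
open CategoryTheory Limits

namespace ExComp

universe v u

variable {E : Type u} [Category.{v} E]

/-!
For `⇒`, the object of sections of `⟨f, g⟩ : Y ⟶ J ⨯ X` over `J` (the pullback of
`(⟨f, g⟩)^X : Y^X ⟶ (J ⨯ X)^X` along the unit `J ⟶ (J ⨯ X)^X`), covered by a projective `W`,
together with `V = W ⨯ X`, is a weak simple product.

For `⇐`, let first `X` be projective. A weak simple product yields a weak exponential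
`ε : W ⨯ X ⟶ B` with `W` projective and, applied to a subobject of `J ⨯ X`, the universal
quantifier `∀_X : Sub(J ⨯ X) → Sub(J)`. So the relation `w ~ w' ↔ ∀ x, ε(w, x) = ε(w', x)` is a
subobject of `W ⨯ W`; it is an equivalence relation, and its quotient in the exact category `E`
is `B^X`. For arbitrary `X`, cover `X` by a projective `X₀` and the kernel pair of `X₀ ↠ X` by a
projective `X₁`: then `B^X` is the equalizer of the two restrictions `B^{X₀} ⇉ B^{X₁}`.
-/

theorem _root_.CategoryTheory.Adjunction.exists_universal_lift {C D : Type*} [Category C]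
    [Category D] [HasPullbacks C] {F : C ⥤ D} {G : D ⥤ C} (adj : F ⊣ G) {J : C} {Y : D}
    (k : Y ⟶ F.obj J) :
    ∃ (S : C) (s : S ⟶ J) (ev : F.obj S ⟶ Y), ev ≫ k = F.map s ∧
      ∀ {T : C} (t : T ⟶ J) (d : F.obj T ⟶ Y), d ≫ k = F.map t →
        ∃ σ : T ⟶ S, σ ≫ s = t ∧ F.map σ ≫ ev = d := by
  refine ⟨pullback (G.map k) (adj.unit.app J), pullback.snd _ _,
    (adj.homEquiv _ _).symm (pullback.fst _ _), ?_, fun t d hd => ?_⟩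
  · rw [← adj.homEquiv_naturality_right_symm, pullback.condition,
      adj.homEquiv_naturality_left_symm]
    simp
  · have hlift : adj.homEquiv _ _ d ≫ G.map k = t ≫ adj.unit.app J := by
      rw [← adj.homEquiv_naturality_right, hd, ← Category.comp_id (F.map t),
        adj.homEquiv_naturality_left, adj.homEquiv_id]
    refine ⟨pullback.lift _ _ hlift, pullback.lift_snd _ _ _, ?_⟩
    rw [← adj.homEquiv_naturality_left_symm, pullback.lift_fst, Equiv.symm_apply_apply]

theorem RegEpi.epi {A B : E} {f : A ⟶ B} (hf : RegEpi f) : Epi f :=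
  hf.some.epi

theorem RegEpi.exists_desc {A B T : E} {f : A ⟶ B} (hf : RegEpi f) (t : A ⟶ T)
    (ht : ∀ {Z : E} (g₁ g₂ : Z ⟶ A), g₁ ≫ f = g₂ ≫ f → g₁ ≫ t = g₂ ≫ t) :
    ∃ t' : B ⟶ T, f ≫ t' = t := by
  have := hf.some.effectiveEpi
  exact ⟨EffectiveEpi.desc f t ht, EffectiveEpi.fac f t ht⟩

theorem RegEpi.exists_lift_of_mono_s6 {A B I J : E} {e : A ⟶ B} (he : RegEpi e) {m : I ⟶ J}
    [Mono m] {a : A ⟶ I} {b : B ⟶ J} (h : a ≫ m = e ≫ b) : ∃ s : B ⟶ I, s ≫ m = b := by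
  have := he.some.effectiveEpi
  exact ⟨(CommSq.mk h).lift, (CommSq.mk h).fac_right⟩

section FiniteLimits

variable [HasFiniteLimits E]

-- Mathlib does not tag these `simp`.
attribute [local simp] prod.lift_fst prod.lift_snd prod.lift_fst_assoc prod.lift_snd_assoc

theorem IsExact.regEpi_of_isPullback (hE : IsExact E) {P X Y Z : E} {a : P ⟶ X} {b : P ⟶ Y}
    {f : X ⟶ Z} {g : Y ⟶ Z} (hP : IsPullback a b f g) (hf : RegEpi f) : RegEpi b := by
  rw [← hP.isoPullback_hom_snd]
  exact (MorphismProperty.RespectsIso.precomp (.regularEpi E) _ _ ⟨hE.stable f g hf⟩).regularEpi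

theorem IsExact.regEpi_prodMap_left (hE : IsExact E) {A A' : E} {e : A' ⟶ A} (he : RegEpi e)
    (X : E) : RegEpi (prod.map e (𝟙 X)) :=
  hE.regEpi_of_isPullback (IsPullback.of_prod_fst_with_id e X) he

theorem IsExact.regEpi_prodMap_right (hE : IsExact E) {A A' : E} {e : A' ⟶ A} (he : RegEpi e)
    (X : E) : RegEpi (prod.map (𝟙 X) e) := by
  have hswap : prod.map (𝟙 X) e =
      (prod.braiding X A').hom ≫ prod.map e (𝟙 X) ≫ (prod.braiding A X).hom := by
    ext <;> simp
  rw [hswap]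
  refine (MorphismProperty.RespectsIso.precomp (.regularEpi E) _ _ ?_).regularEpi
  exact MorphismProperty.RespectsIso.postcomp (.regularEpi E) _ _
    ⟨hE.regEpi_prodMap_left he X⟩

theorem IsExact.exists_prodMap_left_desc (hE : IsExact E) {W Q X B : E} {q : W ⟶ Q}
    (hq : RegEpi q) (g : W ⨯ X ⟶ B)
    (hg : ∀ {Z : E} (k₁ k₂ : Z ⟶ W), k₁ ≫ q = k₂ ≫ q →
      prod.map k₁ (𝟙 X) ≫ g = prod.map k₂ (𝟙 X) ≫ g) :
    ∃ g' : Q ⨯ X ⟶ B, prod.map q (𝟙 X) ≫ g' = g := by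
  refine (hE.regEpi_prodMap_left hq X).exists_desc g fun s₁ s₂ hs => ?_
  have hfst : (s₁ ≫ prod.fst) ≫ q = (s₂ ≫ prod.fst) ≫ q := by
    simpa using congrArg (· ≫ prod.fst) hs
  have hsnd : s₁ ≫ prod.snd = s₂ ≫ prod.snd := by
    simpa using congrArg (· ≫ prod.snd) hs
  have hfactor : ∀ s : _ ⟶ W ⨯ X, s ≫ prod.snd = s₁ ≫ prod.snd →
      s = prod.lift (𝟙 _) (s₁ ≫ prod.snd) ≫ prod.map (s ≫ prod.fst) (𝟙 X) := by
    intro s h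
    ext <;> simp [h]
  rw [hfactor s₁ rfl, hfactor s₂ hsnd.symm, Category.assoc, Category.assoc, hg _ _ hfst]

theorem IsExact.exists_prodMap_right_desc (hE : IsExact E) {A X₀ X B : E} {x₀ : X₀ ⟶ X}
    (hx₀ : RegEpi x₀) (g : A ⨯ X₀ ⟶ B)
    (hg : ∀ {Z : E} (c₁ c₂ : Z ⟶ X₀), c₁ ≫ x₀ = c₂ ≫ x₀ →
      prod.map (𝟙 A) c₁ ≫ g = prod.map (𝟙 A) c₂ ≫ g) :
    ∃ g' : A ⨯ X ⟶ B, prod.map (𝟙 A) x₀ ≫ g' = g := by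
  refine (hE.regEpi_prodMap_right hx₀ A).exists_desc g fun s₁ s₂ hs => ?_
  have hfst : s₁ ≫ prod.fst = s₂ ≫ prod.fst := by
    simpa using congrArg (· ≫ prod.fst) hs
  have hsnd : (s₁ ≫ prod.snd) ≫ x₀ = (s₂ ≫ prod.snd) ≫ x₀ := by
    simpa using congrArg (· ≫ prod.snd) hs
  have hfactor : ∀ s : _ ⟶ A ⨯ X₀, s ≫ prod.fst = s₁ ≫ prod.fst →
      s = prod.lift (s₁ ≫ prod.fst) (𝟙 _) ≫ prod.map (𝟙 A) (s ≫ prod.snd) := by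
    intro s h
    ext <;> simp [h]
  rw [hfactor s₁ rfl, hfactor s₂ hfst.symm, Category.assoc, Category.assoc, hg _ _ hsnd]

theorem IsExact.exists_prodMap_right_desc_of_cover (hE : IsExact E) {A X₀ X₁ X B : E}
    {x₀ : X₀ ⟶ X} (hx₀ : RegEpi x₀) {γ : X₁ ⟶ pullback x₀ x₀} (hγ : RegEpi γ) (g : A ⨯ X₀ ⟶ B)
    (hg : prod.map (𝟙 A) (γ ≫ pullback.fst x₀ x₀) ≫ g =
      prod.map (𝟙 A) (γ ≫ pullback.snd x₀ x₀) ≫ g) :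
    ∃ g' : A ⨯ X ⟶ B, prod.map (𝟙 A) x₀ ≫ g' = g := by
  have := (hE.regEpi_prodMap_right hγ A).epi
  have hπ : prod.map (𝟙 A) (pullback.fst x₀ x₀) ≫ g =
      prod.map (𝟙 A) (pullback.snd x₀ x₀) ≫ g := by
    rwa [← cancel_epi (prod.map (𝟙 A) γ), ← prod.map_id_comp_assoc, ← prod.map_id_comp_assoc]
  refine hE.exists_prodMap_right_desc hx₀ g fun c₁ c₂ hc => ?_
  rw [← pullback.lift_fst c₁ c₂ hc, prod.map_id_comp, Category.assoc, hπ,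
    ← prod.map_id_comp_assoc, pullback.lift_snd]

theorem isEquivRelPair_of_iff {W R : E} (r : R ⟶ W ⨯ W) [Mono r]
    (S : ∀ Z : E, (Z ⟶ W) → (Z ⟶ W) → Prop) (hS : ∀ Z, Equivalence (S Z))
    (hr : ∀ {Z : E} (k₁ k₂ : Z ⟶ W), S Z k₁ k₂ ↔ ∃ ρ : Z ⟶ R, ρ ≫ r = prod.lift k₁ k₂) :
    IsEquivRelPair (r ≫ prod.fst) (r ≫ prod.snd) := by
  have hmem : ∀ {Z : E} (ρ : Z ⟶ R), S Z (ρ ≫ r ≫ prod.fst) (ρ ≫ r ≫ prod.snd) :=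
    fun ρ => (hr _ _).2 ⟨ρ, by ext <;> simp⟩
  have hpair : ∀ {Z : E} {k₁ k₂ : Z ⟶ W}, S Z k₁ k₂ →
      ∃ ρ : Z ⟶ R, ρ ≫ r ≫ prod.fst = k₁ ∧ ρ ≫ r ≫ prod.snd = k₂ := by
    intro Z k₁ k₂ h
    obtain ⟨ρ, hρ⟩ := (hr k₁ k₂).1 h
    exact ⟨ρ, by simp [reassoc_of% hρ], by simp [reassoc_of% hρ]⟩
  refine ⟨fun T h k h₁ h₂ => ?_, hpair ((hS W).refl (𝟙 W)), ?_, fun T p q hpq => ?_⟩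
  · rw [← cancel_mono r]
    ext
    · simpa using h₁
    · simpa using h₂
  · simpa using hpair ((hS R).symm (hmem (𝟙 R)))
  · refine hpair ((hS T).trans (hmem p) ?_)
    rw [hpq]
    exact hmem q

theorem IsExact.exists_regEpi_ker_iff (hE : IsExact E) {W R : E} (r : R ⟶ W ⨯ W) [Mono r]
    (S : ∀ Z : E, (Z ⟶ W) → (Z ⟶ W) → Prop) (hS : ∀ Z, Equivalence (S Z))
    (hr : ∀ {Z : E} (k₁ k₂ : Z ⟶ W), S Z k₁ k₂ ↔ ∃ ρ : Z ⟶ R, ρ ≫ r = prod.lift k₁ k₂) :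
    ∃ (Q : E) (q : W ⟶ Q), RegEpi q ∧
      ∀ {Z : E} (k₁ k₂ : Z ⟶ W), k₁ ≫ q = k₂ ≫ q ↔ S Z k₁ k₂ := by
  obtain ⟨Q, q, hq, ⟨hcolim⟩, hpb⟩ := hE.effective _ _ (isEquivRelPair_of_iff r S hS hr)
  refine ⟨Q, q, ⟨⟨_, _, _, hq, hcolim⟩⟩, fun k₁ k₂ => ⟨fun h => ?_, fun h => ?_⟩⟩
  · refine (hr k₁ k₂).2 ⟨hpb.lift k₁ k₂ h, ?_⟩
    ext <;> simp
  · obtain ⟨ρ, hρ⟩ := (hr k₁ k₂).1 h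
    have h₁ : k₁ = ρ ≫ r ≫ prod.fst := by simp [reassoc_of% hρ]
    have h₂ : k₂ = ρ ≫ r ≫ prod.snd := by simp [reassoc_of% hρ]
    simpa [h₁, h₂] using ρ ≫= hq

theorem wspCone_prod {P : Set E} {J Y X W : E} {f : Y ⟶ J} {g : Y ⟶ X} {w : W ⟶ J}
    (hW : W ∈ P) (hWX : (W ⨯ X) ∈ P) (e : W ⨯ X ⟶ Y)
    (he : e ≫ prod.lift f g = prod.map w (𝟙 X)) :
    WSPCone P f g W (W ⨯ X) w prod.fst prod.snd e where
  memW := hW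
  wp := ⟨hWX, fun _ _ p' q' => ⟨prod.lift p' q', by simp, by simp⟩⟩
  det _ _ h k h₁ h₂ := by rw [Limits.prod.hom_ext h₁ h₂]
  comm₁ := by simpa using (congrArg (· ≫ prod.fst) he).symm
  comm₂ := by simpa using (congrArg (· ≫ prod.snd) he).symm

theorem WSPCone.exists_section {P : Set E} {J Y X W V : E} {f : Y ⟶ J} {g : Y ⟶ X}
    {w : W ⟶ J} {p : V ⟶ W} {q : V ⟶ X} {e : V ⟶ Y} (hc : WSPCone P f g W V w p q e)
    {Z : E} (hZX : (Z ⨯ X) ∈ P) (u : Z ⟶ W) :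
    ∃ σ : Z ⨯ X ⟶ V, σ ≫ p = prod.fst ≫ u ∧ σ ≫ q = prod.snd ∧
      σ ≫ e ≫ prod.lift f g = prod.map (u ≫ w) (𝟙 X) := by
  obtain ⟨σ, hσp, hσq⟩ := hc.wp.lift hZX (prod.fst ≫ u) prod.snd
  refine ⟨σ, hσp, hσq, ?_⟩
  ext
  · simp [← hc.comm₁, reassoc_of% hσp]
  · simp [← hc.comm₂, hσq]

def IsExponential (X B Q : E) (ev : Q ⨯ X ⟶ B) : Prop :=
  ∀ A : E, Function.Bijective fun u : A ⟶ Q => prod.map u (𝟙 X) ≫ ev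

theorem IsExponential.ext {X B Q : E} {ev : Q ⨯ X ⟶ B} (h : IsExponential X B Q ev) {A : E}
    {u u' : A ⟶ Q} (huu' : prod.map u (𝟙 X) ≫ ev = prod.map u' (𝟙 X) ≫ ev) : u = u' :=
  (h A).1 huu'

theorem IsExponential.exists_curry {X B Q : E} {ev : Q ⨯ X ⟶ B} (h : IsExponential X B Q ev)
    {A : E} (g : A ⨯ X ⟶ B) : ∃ u : A ⟶ Q, prod.map u (𝟙 X) ≫ ev = g :=
  (h A).2 g

theorem isLeftAdjoint_of_isExponential {X : E}
    (h : ∀ B : E, ∃ (Q : E) (ev : Q ⨯ X ⟶ B), IsExponential X B Q ev) :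
    (prod.functor.flip.obj X).IsLeftAdjoint := by
  choose Q ev hev using h
  refine (Adjunction.adjunctionOfEquivRight (G_obj := Q)
    (fun A B => (Equiv.ofBijective _ (hev B A)).symm) fun A' A B v g => ?_).isLeftAdjoint
  refine (Equiv.symm_apply_eq _).2 ?_
  change prod.map v (𝟙 X) ≫ g = prod.map (v ≫ _) (𝟙 X) ≫ ev B
  rw [prod.map_comp_id, Category.assoc]
  exact congrArg _ ((Equiv.ofBijective _ (hev B A)).apply_symm_apply g).symm

theorem hasWeakSimpleProducts_of_cartesianClosed (hEP : EnoughRegProjectives E)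
    (hclosed : ∀ X Y : E, RegProjective X → RegProjective Y → RegProjective (X ⨯ Y))
    (hcc : CartesianClosedP E) : HasWeakSimpleProducts {X : E | RegProjective X} := by
  intro J Y X _ _ hX f g
  have := hcc X
  obtain ⟨S, s, ev, hev, hS⟩ : ∃ (S : E) (s : S ⟶ J) (ev : S ⨯ X ⟶ Y),
      ev ≫ prod.lift f g = prod.map s (𝟙 X) ∧
      ∀ {T : E} (t : T ⟶ J) (d : T ⨯ X ⟶ Y), d ≫ prod.lift f g = prod.map t (𝟙 X) →
        ∃ τ : T ⟶ S, τ ≫ s = t ∧ prod.map τ (𝟙 X) ≫ ev = d :=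
    (Adjunction.ofIsLeftAdjoint (prod.functor.flip.obj X)).exists_universal_lift (prod.lift f g)
  obtain ⟨W, ρ, hW, hρ⟩ := hEP S
  refine ⟨W, W ⨯ X, ρ ≫ s, prod.fst, prod.snd, prod.map ρ (𝟙 X) ≫ ev,
    ⟨wspCone_prod hW (hclosed W X hW hX) _ ?_, fun W' V' w' p' q' e' hc => ?_⟩⟩
  · rw [Category.assoc, hev, prod.map_map, Category.comp_id]
  obtain ⟨σ, hσp, hσq, hσ⟩ := hc.exists_section (hclosed W' X hc.memW hX) (𝟙 W')
  obtain ⟨τ, hτs, hτev⟩ :=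
    hS w' (σ ≫ e') (by simpa only [Category.id_comp, Category.assoc] using hσ)
  obtain ⟨α, hα⟩ := hc.memW ρ hρ τ
  have hdet : (prod.lift p' q' ≫ σ) ≫ e' = 𝟙 V' ≫ e' :=
    hc.det hc.wp.mem _ _ (by simp [hσp]) (by simp [hσq])
  refine ⟨α, prod.lift (p' ≫ α) q', by rw [reassoc_of% hα, hτs], by simp, by simp, ?_⟩
  calc prod.lift (p' ≫ α) q' ≫ prod.map ρ (𝟙 X) ≫ ev
      = prod.lift p' q' ≫ prod.map τ (𝟙 X) ≫ ev := by
        rw [prod.lift_map_assoc, ← hα, prod.lift_map_assoc, Category.assoc, Category.comp_id]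
    _ = e' := by rw [hτev, ← Category.assoc, hdet, Category.id_comp]

theorem exists_forall_subobject (hE : IsExact E) (hEP : EnoughRegProjectives E)
    (hclosed : ∀ X Y : E, RegProjective X → RegProjective Y → RegProjective (X ⨯ Y))
    (hWS : HasWeakSimpleProducts {X : E | RegProjective X}) {J X A : E} (hJ : RegProjective J)
    (hX : RegProjective X) (a : A ⟶ J ⨯ X) [Mono a] :
    ∃ (I : E) (m : I ⟶ J), Mono m ∧ ∀ {B : E} (b : B ⟶ J),
      (∃ t : B ⨯ X ⟶ A, t ≫ a = prod.map b (𝟙 X)) ↔ ∃ s : B ⟶ I, s ≫ m = b := by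
  obtain ⟨Y, c, hY, hc⟩ := hEP A
  obtain ⟨W, V, w, p, q, e, hS⟩ := hWS hJ hY hX (c ≫ a ≫ prod.fst) (c ≫ a ≫ prod.snd)
  have hspan : prod.lift (c ≫ a ≫ prod.fst) (c ≫ a ≫ prod.snd) = c ≫ a := by ext <;> simp
  obtain ⟨I, ew, m, hew, hm, rfl⟩ := hE.factor w
  refine ⟨I, m, hm, fun {B} b => ⟨fun ⟨t, ht⟩ => ?_, fun ⟨s, hs⟩ => ?_⟩⟩
  · obtain ⟨B', β, hB', hβ⟩ := hEP B
    obtain ⟨e', he'⟩ := hclosed B' X hB' hX c hc (prod.map β (𝟙 X) ≫ t)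
    obtain ⟨α, -, hα, -⟩ := hS.lift (β ≫ b) prod.fst prod.snd e'
      (wspCone_prod hB' (hclosed B' X hB' hX) e'
        (by rw [hspan, reassoc_of% he', ht, prod.map_map, Category.comp_id]))
    exact hβ.exists_lift_of_mono_s6 (a := α ≫ ew) (by rw [Category.assoc, hα])
  · obtain ⟨B', β, hB', hβ⟩ := hEP B
    obtain ⟨u, hu⟩ := hB' ew hew (β ≫ s)
    obtain ⟨σ, -, -, hσ⟩ := hS.cone.exists_section (hclosed B' X hB' hX) u
    refine (hE.regEpi_prodMap_left hβ X).exists_lift_of_mono_s6 (a := σ ≫ e ≫ c) ?_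
    rw [hspan, reassoc_of% hu, hs] at hσ
    rw [prod.map_map, Category.comp_id, Category.assoc, Category.assoc, hσ]

theorem exists_mono_iff_prodMap_comp_eq (hE : IsExact E) (hEP : EnoughRegProjectives E)
    (hclosed : ∀ X Y : E, RegProjective X → RegProjective Y → RegProjective (X ⨯ Y))
    (hWS : HasWeakSimpleProducts {X : E | RegProjective X}) {W X B : E} (hW : RegProjective W)
    (hX : RegProjective X) (ε : W ⨯ X ⟶ B) :
    ∃ (R : E) (r : R ⟶ W ⨯ W), Mono r ∧ ∀ {Z : E} (k₁ k₂ : Z ⟶ W),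
      prod.map k₁ (𝟙 X) ≫ ε = prod.map k₂ (𝟙 X) ≫ ε ↔ ∃ ρ : Z ⟶ R, ρ ≫ r = prod.lift k₁ k₂ := by
  obtain ⟨R, r, hr, hR⟩ := exists_forall_subobject hE hEP hclosed hWS (hclosed W W hW hW) hX
    (equalizer.ι (prod.map prod.fst (𝟙 X) ≫ ε) (prod.map prod.snd (𝟙 X) ≫ ε))
  refine ⟨R, r, hr, fun k₁ k₂ => Iff.trans ?_ (hR (prod.lift k₁ k₂))⟩
  have hk : ∀ i : W ⨯ W ⟶ W, prod.map (prod.lift k₁ k₂) (𝟙 X) ≫ prod.map i (𝟙 X) ≫ ε =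
      prod.map (prod.lift k₁ k₂ ≫ i) (𝟙 X) ≫ ε := by
    intro i
    rw [prod.map_map_assoc, Category.comp_id]
  constructor
  · intro h
    refine ⟨equalizer.lift _ ?_, equalizer.lift_ι _ _⟩
    simpa only [Category.assoc, hk, prod.lift_fst, prod.lift_snd] using h
  · rintro ⟨t, ht⟩
    have h := t ≫= equalizer.condition (prod.map prod.fst (𝟙 X) ≫ ε) (prod.map prod.snd (𝟙 X) ≫ ε)
    rw [reassoc_of% ht, reassoc_of% ht, hk, hk] at h
    simpa using h

/-- A weak simple product of `T ← (Y₀ ⨯ X) ⨯ T → X`, with `T` a projective cover of the terminal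
object and `Y₀ ↠ B`, is a weak object of all arrows `X ⟶ Y₀`. -/
theorem exists_isQuasiExponential (hEP : EnoughRegProjectives E)
    (hclosed : ∀ X Y : E, RegProjective X → RegProjective Y → RegProjective (X ⨯ Y))
    (hWS : HasWeakSimpleProducts {X : E | RegProjective X}) {X : E} (hX : RegProjective X)
    (B : E) :
    ∃ (W : E) (ε : W ⨯ X ⟶ B), RegProjective W ∧
      IsQuasiExponential {Z : E | RegProjective Z} X W ε := by
  obtain ⟨Y₀, c, hY₀, hc⟩ := hEP B
  obtain ⟨T, t, hT, ht⟩ := hEP (⊤_ E)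
  obtain ⟨W, V, w, p, q, e, hS⟩ := hWS hT (hclosed _ _ (hclosed _ _ hY₀ hX) hT) hX
    (prod.snd : (Y₀ ⨯ X) ⨯ T ⟶ T) (prod.fst ≫ prod.snd)
  obtain ⟨σ, hσp, hσq, -⟩ := hS.cone.exists_section (hclosed _ _ hS.cone.memW hX) (𝟙 W)
  refine ⟨W, σ ≫ e ≫ prod.fst ≫ prod.fst ≫ c, hS.cone.memW, fun Z hZ h => ?_⟩
  obtain ⟨m, hm⟩ := hclosed Z X hZ hX c hc h
  obtain ⟨z, -⟩ := hZ t ht (terminal.from Z)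
  obtain ⟨α, β, -, hβp, hβq, hβe⟩ := hS.lift z prod.fst prod.snd
    (prod.lift (prod.lift m prod.snd) (prod.fst ≫ z))
    (wspCone_prod hZ (hclosed Z X hZ hX) _ (by ext <;> simp))
  have hdet : (prod.map α (𝟙 X) ≫ σ) ≫ e = β ≫ e :=
    hS.cone.det (hclosed Z X hZ hX) _ _ (by simp [hσp, hβp]) (by simp [hσq, hβq])
  refine ⟨α, ?_⟩
  rw [← hm, reassoc_of% hdet, reassoc_of% hβe]
  simp

theorem isExponential_of_quotient (hE : IsExact E) (hEP : EnoughRegProjectives E)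
    {W X B Q : E} {ε : W ⨯ X ⟶ B} (hε : IsQuasiExponential {Z : E | RegProjective Z} X W ε)
    {q : W ⟶ Q} (hq : RegEpi q)
    (hker : ∀ {Z : E} (k₁ k₂ : Z ⟶ W),
      k₁ ≫ q = k₂ ≫ q ↔ prod.map k₁ (𝟙 X) ≫ ε = prod.map k₂ (𝟙 X) ≫ ε)
    {ev : Q ⨯ X ⟶ B} (hev : prod.map q (𝟙 X) ≫ ev = ε) : IsExponential X B Q ev := by
  have hkq : ∀ {Z : E} (k : Z ⟶ W), prod.map (k ≫ q) (𝟙 X) ≫ ev = prod.map k (𝟙 X) ≫ ε := by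
    intro Z k
    rw [prod.map_comp_id, Category.assoc, hev]
  intro A
  obtain ⟨Z, ζ, hZ, hζ⟩ := hEP A
  have := hζ.epi
  have := (hE.regEpi_prodMap_left hζ X).epi
  refine ⟨fun u u' huu' => ?_, fun h => ?_⟩
  · obtain ⟨k, hk⟩ := hZ q hq (ζ ≫ u)
    obtain ⟨k', hk'⟩ := hZ q hq (ζ ≫ u')
    have hkk' : k ≫ q = k' ≫ q := by
      rw [hker, ← hkq, ← hkq, hk, hk', prod.map_comp_id, prod.map_comp_id, Category.assoc,
        Category.assoc]
      exact congrArg _ huu'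
    rw [← cancel_epi ζ, ← hk, ← hk', hkk']
  · obtain ⟨k, hk⟩ := hε hZ (prod.map ζ (𝟙 X) ≫ h)
    obtain ⟨u, hu⟩ := hζ.exists_desc (k ≫ q) fun g₁ g₂ hg => by
      rw [← Category.assoc, ← Category.assoc, hker, prod.map_comp_id, prod.map_comp_id,
        Category.assoc, Category.assoc, hk, ← prod.map_comp_id_assoc, ← prod.map_comp_id_assoc, hg]
    refine ⟨u, (cancel_epi (prod.map ζ (𝟙 X))).1 ?_⟩
    rw [← Category.assoc, ← prod.map_comp_id, hu, hkq, hk]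

theorem exists_isExponential_of_regProjective (hE : IsExact E) (hEP : EnoughRegProjectives E)
    (hclosed : ∀ X Y : E, RegProjective X → RegProjective Y → RegProjective (X ⨯ Y))
    (hWS : HasWeakSimpleProducts {X : E | RegProjective X}) {X : E} (hX : RegProjective X)
    (B : E) : ∃ (Q : E) (ev : Q ⨯ X ⟶ B), IsExponential X B Q ev := by
  obtain ⟨W, ε, hW, hε⟩ := exists_isQuasiExponential hEP hclosed hWS hX B
  obtain ⟨R, r, hr, hR⟩ := exists_mono_iff_prodMap_comp_eq hE hEP hclosed hWS hW hX ε
  obtain ⟨Q, q, hq, hker⟩ := hE.exists_regEpi_ker_iff r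
    (fun _ k₁ k₂ => prod.map k₁ (𝟙 X) ≫ ε = prod.map k₂ (𝟙 X) ≫ ε)
    (fun _ => ⟨fun _ => rfl, Eq.symm, Eq.trans⟩) hR
  obtain ⟨ev, hev⟩ := hE.exists_prodMap_left_desc hq ε fun k₁ k₂ => (hker k₁ k₂).1
  exact ⟨Q, ev, isExponential_of_quotient hE hEP hε hq hker hev⟩

theorem exists_isExponential_of_cover (hE : IsExact E) {X₀ X₁ X B Q₀ Q₁ : E} {x₀ : X₀ ⟶ X}
    (hx₀ : RegEpi x₀) {γ : X₁ ⟶ pullback x₀ x₀} (hγ : RegEpi γ)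
    {ev₀ : Q₀ ⨯ X₀ ⟶ B} (h₀ : IsExponential X₀ B Q₀ ev₀)
    {ev₁ : Q₁ ⨯ X₁ ⟶ B} (h₁ : IsExponential X₁ B Q₁ ev₁) :
    ∃ (Q : E) (ev : Q ⨯ X ⟶ B), IsExponential X B Q ev := by
  set j₁ := γ ≫ pullback.fst x₀ x₀
  set j₂ := γ ≫ pullback.snd x₀ x₀
  choose δ hδ using fun i : X₁ ⟶ X₀ => h₁.exists_curry (prod.map (𝟙 Q₀) i ≫ ev₀)
  have hcompat : ∀ {A : E} (v : A ⟶ Q₀), v ≫ δ j₁ = v ≫ δ j₂ ↔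
      prod.map (𝟙 A) j₁ ≫ prod.map v (𝟙 X₀) ≫ ev₀ =
        prod.map (𝟙 A) j₂ ≫ prod.map v (𝟙 X₀) ≫ ev₀ := by
    intro A v
    have key : ∀ i, prod.map (v ≫ δ i) (𝟙 X₁) ≫ ev₁ =
        prod.map (𝟙 A) i ≫ prod.map v (𝟙 X₀) ≫ ev₀ := by
      intro i
      rw [prod.map_comp_id, Category.assoc, hδ, prod.map_swap_assoc]
    rw [← key, ← key]
    exact ⟨fun h => by rw [h], h₁.ext⟩
  let ι := equalizer.ι (δ j₁) (δ j₂)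
  obtain ⟨ev, hev⟩ := hE.exists_prodMap_right_desc_of_cover hx₀ hγ (prod.map ι (𝟙 X₀) ≫ ev₀)
    ((hcompat ι).1 (equalizer.condition _ _))
  have hx : ∀ {A : E} (u : A ⟶ equalizer (δ j₁) (δ j₂)),
      prod.map (𝟙 A) x₀ ≫ prod.map u (𝟙 X) ≫ ev = prod.map (u ≫ ι) (𝟙 X₀) ≫ ev₀ := by
    intro A u
    rw [prod.map_swap_assoc, hev, prod.map_comp_id, Category.assoc]
  refine ⟨equalizer (δ j₁) (δ j₂), ev, fun A => ⟨fun u u' huu' => ?_, fun h => ?_⟩⟩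
  · refine equalizer.hom_ext (h₀.ext ?_)
    rw [← hx, ← hx]
    exact congrArg _ huu'
  · obtain ⟨v, hv⟩ := h₀.exists_curry (prod.map (𝟙 A) x₀ ≫ h)
    have hv' : v ≫ δ j₁ = v ≫ δ j₂ := by
      refine (hcompat v).2 ?_
      rw [hv, ← prod.map_id_comp_assoc, ← prod.map_id_comp_assoc]
      simp only [j₁, j₂, Category.assoc, pullback.condition]
    have := (hE.regEpi_prodMap_right hx₀ A).epi
    refine ⟨equalizer.lift v hv', (cancel_epi (prod.map (𝟙 A) x₀)).1 ?_⟩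
    dsimp only
    rw [hx, equalizer.lift_ι, hv]

theorem cartesianClosed_of_hasWeakSimpleProducts (hE : IsExact E) (hEP : EnoughRegProjectives E)
    (hclosed : ∀ X Y : E, RegProjective X → RegProjective Y → RegProjective (X ⨯ Y))
    (hWS : HasWeakSimpleProducts {X : E | RegProjective X}) : CartesianClosedP E := by
  intro X
  refine isLeftAdjoint_of_isExponential fun B => ?_
  obtain ⟨X₀, x₀, hX₀, hx₀⟩ := hEP X
  obtain ⟨X₁, γ, hX₁, hγ⟩ := hEP (pullback x₀ x₀)
  obtain ⟨Q₀, ev₀, h₀⟩ := exists_isExponential_of_regProjective hE hEP hclosed hWS hX₀ B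
  obtain ⟨Q₁, ev₁, h₁⟩ := exists_isExponential_of_regProjective hE hEP hclosed hWS hX₁ B
  exact exists_isExponential_of_cover hE hx₀ hγ h₀ h₁

end FiniteLimits

/-- If the projectives of `E` are closed under binary products, then `E`
is cartesian closed iff the full subcategory of projectives has weak simple
products. -/
theorem stmt6 {E : Type u} [Category.{v} E] [HasFiniteLimits E]
    (hE : IsExact E) (hEP : EnoughRegProjectives E)
    (hclosed : ∀ X Y : E, RegProjective X → RegProjective Y → RegProjective (X ⨯ Y)) :
    CartesianClosedP E ↔ HasWeakSimpleProducts {X : E | RegProjective X} :=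
  ⟨hasWeakSimpleProducts_of_cartesianClosed hEP hclosed,
    cartesianClosed_of_hasWeakSimpleProducts hE hEP hclosed⟩

end ExComp
end
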